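/- arXiv:1303.2083 — 3 statements merged into one kernel-verified Lean document; each statement's English description precedes it below -/
import Mathlib

section
/- Let Λ = Λ_{(0,0)} be the Morita ring of A, B, M, N with zero bimodule maps, with idempotents e₁ = (1,0,0,0) and e₂ = (0,0,0,1). A left Λ-module Z is simple if and only if either (i) e₂·Z = 0 and Z is a simple left A-module under the action a·z := (a,0,0,0)·z, or (ii) e₁·Z = 0 and Z is a simple left B-module under the action b·z := (0,0,0,b)·z. (In particular every simple Λ_{(0,0)}-module is the restriction of scalars along θ₁ of a simple A-module or along θ₂ of a simple B-module.) -/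
set_option linter.unusedVariables false
set_option linter.unusedSectionVars false

open MulOpposite

universe u v

variable (A : Type u) (B : Type u) (M : Type u) (N : Type u)
variable [Ring A] [Ring B] [AddCommGroup M] [AddCommGroup N]
variable [Module B M] [Module Aᵐᵒᵖ M] [SMulCommClass B Aᵐᵒᵖ M]
variable [Module A N] [Module Bᵐᵒᵖ N] [SMulCommClass A Bᵐᵒᵖ N]

@[ext] structure Morita00 where
  a : A
  n : N
  m : M
  b : B

namespace Morita00

variable {A B M N}

def equivProd : Morita00 A B M N ≃ A × N × M × B where
  toFun x := (x.a, x.n, x.m, x.b)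
  invFun p := ⟨p.1, p.2.1, p.2.2.1, p.2.2.2⟩
  left_inv x := rfl
  right_inv p := rfl

instance instAddCommGroup : AddCommGroup (Morita00 A B M N) :=
  (equivProd (A := A) (B := B) (M := M) (N := N)).addCommGroup

@[simp] lemma add_a (x y : Morita00 A B M N) : (x + y).a = x.a + y.a := rfl
@[simp] lemma add_n (x y : Morita00 A B M N) : (x + y).n = x.n + y.n := rfl
@[simp] lemma add_m (x y : Morita00 A B M N) : (x + y).m = x.m + y.m := rfl
@[simp] lemma add_b (x y : Morita00 A B M N) : (x + y).b = x.b + y.b := rfl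
@[simp] lemma zero_a : (0 : Morita00 A B M N).a = 0 := rfl
@[simp] lemma zero_n : (0 : Morita00 A B M N).n = 0 := rfl
@[simp] lemma zero_m : (0 : Morita00 A B M N).m = 0 := rfl
@[simp] lemma zero_b : (0 : Morita00 A B M N).b = 0 := rfl
@[simp] lemma neg_a (x : Morita00 A B M N) : (-x).a = -x.a := rfl
@[simp] lemma neg_n (x : Morita00 A B M N) : (-x).n = -x.n := rfl
@[simp] lemma neg_m (x : Morita00 A B M N) : (-x).m = -x.m := rfl
@[simp] lemma neg_b (x : Morita00 A B M N) : (-x).b = -x.b := rfl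

instance instMul : Mul (Morita00 A B M N) :=
  ⟨fun x y => ⟨x.a * y.a, x.a • y.n + op y.b • x.n, op y.a • x.m + x.b • y.m, x.b * y.b⟩⟩

instance instOne : One (Morita00 A B M N) := ⟨⟨1, 0, 0, 1⟩⟩

@[simp] lemma mul_a (x y : Morita00 A B M N) : (x * y).a = x.a * y.a := rfl
@[simp] lemma mul_n (x y : Morita00 A B M N) :
    (x * y).n = x.a • y.n + op y.b • x.n := rfl
@[simp] lemma mul_m (x y : Morita00 A B M N) :
    (x * y).m = op y.a • x.m + x.b • y.m := rfl
@[simp] lemma mul_b (x y : Morita00 A B M N) : (x * y).b = x.b * y.b := rfl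
@[simp] lemma one_a : (1 : Morita00 A B M N).a = 1 := rfl
@[simp] lemma one_n : (1 : Morita00 A B M N).n = 0 := rfl
@[simp] lemma one_m : (1 : Morita00 A B M N).m = 0 := rfl
@[simp] lemma one_b : (1 : Morita00 A B M N).b = 1 := rfl

instance instRing : Ring (Morita00 A B M N) where
  __ := instAddCommGroup
  __ := instMul
  __ := instOne
  mul_assoc x y z := by
    ext
    · simp only [mul_a]; rw [mul_assoc]
    · simp only [mul_n, mul_a, mul_b, smul_add, op_mul, mul_smul]
      rw [smul_comm x.a (op z.b) y.n]; abel
    · simp only [mul_m, mul_a, mul_b, smul_add, op_mul, mul_smul]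
      rw [smul_comm x.b (op z.a) y.m]; abel
    · simp only [mul_b]; rw [mul_assoc]
  one_mul x := by ext <;> simp
  mul_one x := by ext <;> simp
  left_distrib x y z := by
    ext <;> simp [mul_add, smul_add, add_smul, op_add] <;> abel
  right_distrib x y z := by
    ext <;> simp [add_mul, smul_add, add_smul, op_add] <;> abel
  zero_mul x := by ext <;> simp
  mul_zero x := by ext <;> simp

variable (A B M N)

/-- The projection `θ₁ : Λ_{(0,0)} → A`. -/
def θ₁ : Morita00 A B M N →+* A where
  toFun x := x.a
  map_one' := rfl
  map_mul' _ _ := rfl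
  map_zero' := rfl
  map_add' _ _ := rfl

/-- The projection `θ₂ : Λ_{(0,0)} → B`. -/
def θ₂ : Morita00 A B M N →+* B where
  toFun x := x.b
  map_one' := rfl
  map_mul' _ _ := rfl
  map_zero' := rfl
  map_add' _ _ := rfl

@[simp] lemma θ₁_apply (x : Morita00 A B M N) : θ₁ A B M N x = x.a := rfl
@[simp] lemma θ₂_apply (x : Morita00 A B M N) : θ₂ A B M N x = x.b := rfl

/-- The idempotent `e₁ = (1,0,0,0)`. -/
def e₁ : Morita00 A B M N := ⟨1, 0, 0, 0⟩

/-- The idempotent `e₂ = (0,0,0,1)`. -/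
def e₂ : Morita00 A B M N := ⟨0, 0, 0, 1⟩

end Morita00

section Simple

open Morita00

variable {A B M N}

/-- If `e₂ = (0,0,0,1)` annihilates the `Λ_{(0,0)}`-module `Z`, then `Z` is a left
`A`-module under the action `a • z := (a,0,0,0) • z`. -/
def modA (Z : Type v) [AddCommGroup Z] [Module (Morita00 A B M N) Z]
    (h : ∀ z : Z, e₂ A B M N • z = 0) : Module A Z where
  smul a z := (⟨a, 0, 0, 0⟩ : Morita00 A B M N) • z
  one_smul z := show (⟨1, 0, 0, 0⟩ : Morita00 A B M N) • z = z by
    have h1 : (1 : Morita00 A B M N) = ⟨1, 0, 0, 0⟩ + e₂ A B M N := by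
      ext <;> simp [e₂]
    have := congrArg (· • z) h1
    simp only [one_smul, add_smul, h z, add_zero] at this
    exact this.symm
  mul_smul a a' z := show (⟨a * a', 0, 0, 0⟩ : Morita00 A B M N) • z = _ by
    have : (⟨a * a', 0, 0, 0⟩ : Morita00 A B M N) = ⟨a, 0, 0, 0⟩ * ⟨a', 0, 0, 0⟩ := by
      ext <;> simp
    rw [this, mul_smul]; rfl
  smul_zero a := smul_zero (⟨a, 0, 0, 0⟩ : Morita00 A B M N)
  smul_add a z w := smul_add (⟨a, 0, 0, 0⟩ : Morita00 A B M N) z w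
  add_smul a a' z := show (⟨a + a', 0, 0, 0⟩ : Morita00 A B M N) • z = _ by
    have : (⟨a + a', 0, 0, 0⟩ : Morita00 A B M N) = ⟨a, 0, 0, 0⟩ + ⟨a', 0, 0, 0⟩ := by
      ext <;> simp
    rw [this, add_smul]; rfl
  zero_smul z := show (⟨(0 : A), 0, 0, 0⟩ : Morita00 A B M N) • z = 0 by
    have : (⟨(0 : A), 0, 0, 0⟩ : Morita00 A B M N) = 0 := by ext <;> simp
    rw [this, zero_smul]

/-- If `e₁ = (1,0,0,0)` annihilates the `Λ_{(0,0)}`-module `Z`, then `Z` is a left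
`B`-module under the action `b • z := (0,0,0,b) • z`. -/
def modB (Z : Type v) [AddCommGroup Z] [Module (Morita00 A B M N) Z]
    (h : ∀ z : Z, e₁ A B M N • z = 0) : Module B Z where
  smul b z := (⟨0, 0, 0, b⟩ : Morita00 A B M N) • z
  one_smul z := show (⟨0, 0, 0, 1⟩ : Morita00 A B M N) • z = z by
    have h1 : (1 : Morita00 A B M N) = ⟨0, 0, 0, 1⟩ + e₁ A B M N := by
      ext <;> simp [e₁]
    have := congrArg (· • z) h1
    simp only [one_smul, add_smul, h z, add_zero] at this
    exact this.symm
  mul_smul b b' z := show (⟨0, 0, 0, b * b'⟩ : Morita00 A B M N) • z = _ by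
    have : (⟨0, 0, 0, b * b'⟩ : Morita00 A B M N) = ⟨0, 0, 0, b⟩ * ⟨0, 0, 0, b'⟩ := by
      ext <;> simp
    rw [this, mul_smul]; rfl
  smul_zero b := smul_zero (⟨0, 0, 0, b⟩ : Morita00 A B M N)
  smul_add b z w := smul_add (⟨0, 0, 0, b⟩ : Morita00 A B M N) z w
  add_smul b b' z := show (⟨0, 0, 0, b + b'⟩ : Morita00 A B M N) • z = _ by
    have : (⟨0, 0, 0, b + b'⟩ : Morita00 A B M N) = ⟨0, 0, 0, b⟩ + ⟨0, 0, 0, b'⟩ := by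
      ext <;> simp
    rw [this, add_smul]; rfl
  zero_smul z := show (⟨0, 0, 0, (0 : B)⟩ : Morita00 A B M N) • z = 0 by
    have : (⟨0, 0, 0, (0 : B)⟩ : Morita00 A B M N) = 0 := by ext <;> simp
    rw [this, zero_smul]

lemma smul_eq_of_e₂ {Z : Type v} [AddCommGroup Z] [Module (Morita00 A B M N) Z]
    (h : ∀ z : Z, e₂ A B M N • z = 0) (x : Morita00 A B M N) (z : Z) :
    x • z = (⟨x.a, 0, 0, 0⟩ : Morita00 A B M N) • z := by
  have hx : x = (⟨x.a, 0, 0, 0⟩ : Morita00 A B M N)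
      + (⟨0, x.n, 0, 0⟩ : Morita00 A B M N) * e₂ A B M N
      + e₂ A B M N * (⟨0, 0, x.m, 0⟩ : Morita00 A B M N)
      + (⟨0, 0, 0, x.b⟩ : Morita00 A B M N) * e₂ A B M N := by
    ext <;> simp [e₂]
  conv_lhs => rw [hx]
  simp only [add_smul, mul_smul, h, smul_zero, add_zero]

lemma smul_eq_of_e₁ {Z : Type v} [AddCommGroup Z] [Module (Morita00 A B M N) Z]
    (h : ∀ z : Z, e₁ A B M N • z = 0) (x : Morita00 A B M N) (z : Z) :
    x • z = (⟨0, 0, 0, x.b⟩ : Morita00 A B M N) • z := by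
  have hx : x = (⟨0, 0, 0, x.b⟩ : Morita00 A B M N)
      + (⟨x.a, 0, 0, 0⟩ : Morita00 A B M N) * e₁ A B M N
      + e₁ A B M N * (⟨0, x.n, 0, 0⟩ : Morita00 A B M N)
      + (⟨0, 0, x.m, 0⟩ : Morita00 A B M N) * e₁ A B M N := by
    ext <;> simp [e₁]
  conv_lhs => rw [hx]
  simp only [add_smul, mul_smul, h, smul_zero, add_zero]

lemma isSimpleModule_iff_of_e₂ {Z : Type v} [AddCommGroup Z] [Module (Morita00 A B M N) Z]
    (h : ∀ z : Z, e₂ A B M N • z = 0) :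
    letI := modA (A := A) (B := B) (M := M) (N := N) Z h
    (IsSimpleModule (Morita00 A B M N) Z ↔ IsSimpleModule A Z) := by
  letI := modA (A := A) (B := B) (M := M) (N := N) Z h
  have key : ∀ (a : A) (z : Z), a • z = (⟨a, 0, 0, 0⟩ : Morita00 A B M N) • z :=
    fun _ _ => rfl
  let e : Submodule (Morita00 A B M N) Z ≃o Submodule A Z :=
  { toFun := fun q =>
      { carrier := q
        add_mem' := fun hx hy => q.add_mem hx hy
        zero_mem' := q.zero_mem
        smul_mem' := fun a z hz => by
          show a • z ∈ (q : Set Z); rw [key]; exact q.smul_mem _ hz }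
    invFun := fun p =>
      { carrier := p
        add_mem' := fun hx hy => p.add_mem hx hy
        zero_mem' := p.zero_mem
        smul_mem' := fun x z hz => by
          show x • z ∈ (p : Set Z)
          rw [smul_eq_of_e₂ h, ← key]; exact p.smul_mem _ hz }
    left_inv := fun q => rfl
    right_inv := fun p => rfl
    map_rel_iff' := Iff.rfl }
  rw [isSimpleModule_iff, isSimpleModule_iff]; exact e.isSimpleOrder_iff

lemma isSimpleModule_iff_of_e₁ {Z : Type v} [AddCommGroup Z] [Module (Morita00 A B M N) Z]
    (h : ∀ z : Z, e₁ A B M N • z = 0) :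
    letI := modB (A := A) (B := B) (M := M) (N := N) Z h
    (IsSimpleModule (Morita00 A B M N) Z ↔ IsSimpleModule B Z) := by
  letI := modB (A := A) (B := B) (M := M) (N := N) Z h
  have key : ∀ (b : B) (z : Z), b • z = (⟨0, 0, 0, b⟩ : Morita00 A B M N) • z :=
    fun _ _ => rfl
  let e : Submodule (Morita00 A B M N) Z ≃o Submodule B Z :=
  { toFun := fun q =>
      { carrier := q
        add_mem' := fun hx hy => q.add_mem hx hy
        zero_mem' := q.zero_mem
        smul_mem' := fun b z hz => by
          show b • z ∈ (q : Set Z); rw [key]; exact q.smul_mem _ hz }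
    invFun := fun p =>
      { carrier := p
        add_mem' := fun hx hy => p.add_mem hx hy
        zero_mem' := p.zero_mem
        smul_mem' := fun x z hz => by
          show x • z ∈ (p : Set Z)
          rw [smul_eq_of_e₁ h, ← key]; exact p.smul_mem _ hz }
    left_inv := fun q => rfl
    right_inv := fun p => rfl
    map_rel_iff' := Iff.rfl }
  rw [isSimpleModule_iff, isSimpleModule_iff]; exact e.isSimpleOrder_iff

/-- A left `Λ_{(0,0)}`-module `Z` is simple if and only if either `e₂·Z = 0` and
`Z` is a simple left `A`-module under `a • z := (a,0,0,0) • z`, or `e₁·Z = 0` and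
`Z` is a simple left `B`-module under `b • z := (0,0,0,b) • z`. -/
theorem morita00_isSimpleModule_iff (Z : Type v) [AddCommGroup Z]
    [Module (Morita00 A B M N) Z] :
    IsSimpleModule (Morita00 A B M N) Z ↔
      ((∃ h : ∀ z : Z, e₂ A B M N • z = 0,
          letI := modA (A := A) (B := B) (M := M) (N := N) Z h
          IsSimpleModule A Z) ∨
       (∃ h : ∀ z : Z, e₁ A B M N • z = 0,
          letI := modB (A := A) (B := B) (M := M) (N := N) Z h
          IsSimpleModule B Z)) := by
  constructor
  · intro hs
    -- The square-zero ideal `J = {(0,n,m,0)}` acts as zero on any simple module.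
    let K : Submodule (Morita00 A B M N) Z :=
      { carrier := {z | ∀ (n : N) (m : M), (⟨0, n, m, 0⟩ : Morita00 A B M N) • z = 0}
        zero_mem' := fun n m => smul_zero _
        add_mem' := fun {x y} hx hy n m => by rw [smul_add, hx, hy, add_zero]
        smul_mem' := fun c z hz n m => by
          show (⟨0, n, m, 0⟩ : Morita00 A B M N) • c • z = 0
          rw [← mul_smul]
          have hc : (⟨0, n, m, 0⟩ : Morita00 A B M N) * c
              = (⟨0, op c.b • n, op c.a • m, 0⟩ : Morita00 A B M N) := by
            ext <;> simp
          rw [hc]; exact hz _ _ }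
    have hJ : ∀ (n : N) (m : M) (z : Z), (⟨0, n, m, 0⟩ : Morita00 A B M N) • z = 0 := by
      rcases hs.1.2 K with hK | hK
      · intro n m z
        have hmem : ∀ (n' : N) (m' : M) (w : Z),
            (⟨0, n', m', 0⟩ : Morita00 A B M N) • w ∈ K := by
          intro n' m' w n'' m''
          rw [← mul_smul]
          have : (⟨0, n'', m'', 0⟩ : Morita00 A B M N) * ⟨0, n', m', 0⟩
              = (0 : Morita00 A B M N) := by
            ext <;> simp
          rw [this, zero_smul]
        have := hmem n m z
        rw [hK, Submodule.mem_bot] at this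
        exact this
      · intro n m z
        have : z ∈ K := hK ▸ Submodule.mem_top
        exact this n m
    -- `S₂ = {z | e₂ • z = 0}` is a submodule.
    let S₂ : Submodule (Morita00 A B M N) Z :=
      { carrier := {z | e₂ A B M N • z = 0}
        zero_mem' := smul_zero _
        add_mem' := fun {x y} hx hy => by
          show e₂ A B M N • (x + y) = 0
          rw [smul_add, hx, hy, add_zero]
        smul_mem' := fun c z hz => by
          show e₂ A B M N • c • z = 0
          rw [← mul_smul]
          have hc : e₂ A B M N * c = (⟨0, 0, c.m, 0⟩ : Morita00 A B M N)
              + (⟨0, 0, 0, c.b⟩ : Morita00 A B M N) * e₂ A B M N := by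
            ext <;> simp [e₂]
          rw [hc, add_smul, hJ, mul_smul, hz, smul_zero, add_zero] }
    rcases hs.1.2 S₂ with hS | hS
    · -- e₂ • Z ≠ 0 is impossible here: S₂ = ⊥ means e₁ annihilates Z.
      right
      have h₁ : ∀ z : Z, e₁ A B M N • z = 0 := by
        intro z
        have hmem : e₁ A B M N • z ∈ S₂ := by
          show e₂ A B M N • e₁ A B M N • z = 0
          rw [← mul_smul]
          have : e₂ A B M N * e₁ A B M N = 0 := by ext <;> simp [e₁, e₂]
          rw [this, zero_smul]
        rw [hS, Submodule.mem_bot] at hmem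
        exact hmem
      exact ⟨h₁, (isSimpleModule_iff_of_e₁ h₁).mp hs⟩
    · left
      have h₂ : ∀ z : Z, e₂ A B M N • z = 0 := by
        intro z
        have : z ∈ S₂ := hS ▸ Submodule.mem_top
        exact this
      exact ⟨h₂, (isSimpleModule_iff_of_e₂ h₂).mp hs⟩
  · rintro (⟨h, hA⟩ | ⟨h, hB⟩)
    · exact (isSimpleModule_iff_of_e₂ h).mpr hA
    · exact (isSimpleModule_iff_of_e₁ h).mpr hB

end Simple
end

section
/- Let Λ = Λ_{(0,0)} be the Morita ring of A, B, M, N with zero bimodule maps. Then Λe₁ is a projective left Λ-module and there is a short exact sequence of left Λ-modules 0 → M↓ → Λe₁ → A↓ → 0, where M↓ → Λe₁ is m ↦ (0,0,m,0) and Λe₁ → A↓ is (a,0,m,0) ↦ a. If M ≠ 0, then A↓ is not a projective Λ-module and pd_Λ(A↓) = 1 + pd_Λ(M↓). Dually, there is a short exact sequence 0 → N↓ → Λe₂ → B↓ → 0, and if N ≠ 0 then pd_Λ(B↓) = 1 + pd_Λ(N↓). -/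
set_option linter.unusedVariables false
set_option linter.unusedSectionVars false

open MulOpposite

universe u v

variable (A : Type u) (B : Type u) (M : Type u) (N : Type u)
variable [Ring A] [Ring B] [AddCommGroup M] [AddCommGroup N]
variable [Module B M] [Module Aᵐᵒᵖ M] [SMulCommClass B Aᵐᵒᵖ M]
variable [Module A N] [Module Bᵐᵒᵖ N] [SMulCommClass A Bᵐᵒᵖ N]

/-- Restriction of scalars along a ring homomorphism `f : R →+* S`: the type
`Res f X` is `X`, regarded as an `R`-module via `f`. -/
@[nolint unusedArguments]
def Res {R S : Type*} [Semiring R] [Semiring S] (f : R →+* S) (X : Type v) : Type v := X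

namespace Res

variable {R S : Type*} [Semiring R] [Semiring S] (f : R →+* S) (X : Type v)

instance [AddCommGroup X] : AddCommGroup (Res f X) := inferInstanceAs (AddCommGroup X)
instance [AddCommGroup X] [Module S X] : Module R (Res f X) := Module.compHom X f

/-- The identity map, viewed as a function `X → Res f X`. -/
def mk [AddCommGroup X] : X → Res f X := id

variable {f X}

@[simp] lemma smul_def [AddCommGroup X] [Module S X] (r : R) (x : X) :
    r • (Res.mk f X x) = Res.mk f X (f r • x) := rfl

end Res

/-- `HasPDLE R n M` says that the left `R`-module `M` has projective dimension at
most `n`: i.e. it admits a projective resolution of length at most `n`. -/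
def HasPDLE (R : Type u) [Ring R] : ∀ (n : ℕ) (M : Type v) [AddCommGroup M] [Module R M], Prop
  | 0, M, _, _ => Module.Projective R M
  | n + 1, M, _, _ =>
    ∃ (P : Type v) (_ : AddCommGroup P) (_ : Module R P) (f : P →ₗ[R] M),
      Function.Surjective f ∧ Module.Projective R P ∧ HasPDLE R n ↥(LinearMap.ker f)

/-- The projective dimension of a left `R`-module `M`, as an element of `ℕ∞`
(with value `⊤` if `M` has no finite projective resolution). -/
noncomputable def projDim (R : Type u) [Ring R] (M : Type v) [AddCommGroup M] [Module R M] : ℕ∞ :=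
  sInf {d : ℕ∞ | ∃ n : ℕ, d = n ∧ HasPDLE R n M}

/-- `HasIDLE R n M` says that the left `R`-module `M` has injective dimension at
most `n`. -/
def HasIDLE (R : Type u) [Ring R] : ∀ (n : ℕ) (M : Type v) [AddCommGroup M] [Module R M], Prop
  | 0, M, _, _ => Module.Injective R M
  | n + 1, M, _, _ =>
    ∃ (I : Type v) (_ : AddCommGroup I) (_ : Module R I) (f : M →ₗ[R] I),
      Function.Injective f ∧ Module.Injective R I ∧ HasIDLE R n (I ⧸ LinearMap.range f)

/-- A ring is Gorenstein if it has finite injective dimension as a left module and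
as a right module over itself. -/
def IsGorenstein (Γ : Type u) [Ring Γ] : Prop :=
  (∃ n : ℕ, HasIDLE Γ n Γ) ∧ ∃ n : ℕ, HasIDLE Γᵐᵒᵖ n Γ

section Tight

variable (Λ : Type u) [Ring Λ] (e : Λ)

/-- A projective resolution of the `Λ`-module `Z` all of whose terms are
annihilated by the element `e` (a "tight" projective resolution). -/
structure TightProjRes (Z : Type v) [AddCommGroup Z] [Module Λ Z] : Type (max u (v + 1)) where
  P : ℕ → Type v
  [acg : ∀ k, AddCommGroup (P k)]
  [mod : ∀ k, Module Λ (P k)]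
  d : ∀ k, P (k + 1) →ₗ[Λ] P k
  ε : P 0 →ₗ[Λ] Z
  ε_surjective : Function.Surjective ε
  exact₀ : LinearMap.ker ε = LinearMap.range (d 0)
  exact : ∀ k, LinearMap.ker (d k) = LinearMap.range (d (k + 1))
  projective : ∀ k, Module.Projective Λ (P k)
  tight : ∀ k (x : P k), e • x = 0

end Tight

section AuxPD

universe w

variable {R : Type w} [Ring R]

namespace AuxPD

/-- The product of two submodules is isomorphic to the product of the corresponding modules. -/
def prodSubEquiv {X Y : Type w} [AddCommGroup X] [AddCommGroup Y] [Module R X] [Module R Y]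
    (p : Submodule R X) (q : Submodule R Y) : ↥(p.prod q) ≃ₗ[R] ↥p × ↥q where
  toFun z := (⟨z.1.1, z.2.1⟩, ⟨z.1.2, z.2.2⟩)
  invFun z := ⟨(z.1.1, z.2.1), z.1.2, z.2.2⟩
  map_add' _ _ := rfl
  map_smul' _ _ := rfl
  left_inv _ := rfl
  right_inv _ := rfl

theorem hasPDLE_congr : ∀ (n : ℕ) {X Y : Type w} [AddCommGroup X] [Module R X]
    [AddCommGroup Y] [Module R Y], (X ≃ₗ[R] Y) → HasPDLE R n X → HasPDLE R n Y
  | 0, X, Y, _, _, _, _, e, h => by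
      haveI : Module.Projective R X := h
      exact Module.Projective.of_equiv e
  | n+1, X, Y, _, _, _, _, e, h => by
      obtain ⟨P, iP1, iP2, f, hf, hP, hker⟩ := h
      refine ⟨P, iP1, iP2, e.toLinearMap ∘ₗ f, e.surjective.comp hf, hP, ?_⟩
      have hk : LinearMap.ker (e.toLinearMap ∘ₗ f) = LinearMap.ker f := by
        rw [LinearMap.ker_comp, LinearEquiv.ker, Submodule.comap_bot]
      rw [hk]; exact hker

theorem hasPDLE_prod_proj : ∀ (n : ℕ) {X Y : Type w} [AddCommGroup X] [Module R X]
    [AddCommGroup Y] [Module R Y], HasPDLE R n X → Module.Projective R Y →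
      HasPDLE R n (X × Y)
  | 0, X, Y, _, _, _, _, h, hY => by
      haveI : Module.Projective R X := h
      haveI := hY
      show Module.Projective R (X × Y)
      infer_instance
  | n+1, X, Y, _, _, _, _, h, hY => by
      obtain ⟨P, iP1, iP2, f, hf, hP, hker⟩ := h
      haveI := hP; haveI := hY
      refine ⟨P × Y, inferInstance, inferInstance, f.prodMap LinearMap.id,
        fun z => ?_, inferInstance, ?_⟩
      · obtain ⟨x, hx⟩ := hf z.1
        exact ⟨(x, z.2), by simp [LinearMap.prodMap_apply, hx]⟩
      · refine hasPDLE_congr n ?_ hker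
        exact {
          toFun := fun k => ⟨(k.1, 0), by
            simp [LinearMap.mem_ker, LinearMap.prodMap_apply, Prod.ext_iff,
              LinearMap.mem_ker.mp k.2]⟩
          invFun := fun t => ⟨t.1.1, by
            have ht : f.prodMap LinearMap.id t.1 = 0 := LinearMap.mem_ker.mp t.2
            rw [LinearMap.prodMap_apply] at ht
            exact LinearMap.mem_ker.mpr (congrArg Prod.fst ht)⟩
          map_add' := fun a b => by apply Subtype.ext; simp
          map_smul' := fun r a => by apply Subtype.ext; simp
          left_inv := fun k => by apply Subtype.ext; rfl
          right_inv := fun t => by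
            apply Subtype.ext
            have ht := LinearMap.mem_ker.mp t.2
            have h2 := congrArg Prod.snd ht
            simp only [LinearMap.prodMap_apply, LinearMap.id_apply] at h2
            exact Prod.ext rfl h2.symm }

/-- A split surjection with projective base gives a product decomposition. -/
noncomputable def splitEquiv {P X : Type w} [AddCommGroup P] [Module R P] [AddCommGroup X]
    [Module R X] (f : P →ₗ[R] X) (s : X →ₗ[R] P) (hs : f ∘ₗ s = LinearMap.id) :
    P ≃ₗ[R] ↥(LinearMap.ker f) × X :=
  LinearEquiv.ofLinear
    (LinearMap.prod
      ((LinearMap.id - s ∘ₗ f).codRestrict (LinearMap.ker f) (fun p => by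
        have h := LinearMap.congr_fun hs (f p)
        simp only [LinearMap.comp_apply, LinearMap.id_apply] at h
        simp [LinearMap.mem_ker, h]))
      f)
    (LinearMap.coprod (LinearMap.ker f).subtype s)
    (by
      apply LinearMap.ext
      rintro ⟨⟨k, hk⟩, x⟩
      have hk' : f k = 0 := LinearMap.mem_ker.mp hk
      have h := LinearMap.congr_fun hs x
      simp only [LinearMap.comp_apply, LinearMap.id_apply] at h
      refine Prod.ext (Subtype.ext ?_) ?_ <;>
        simp [LinearMap.codRestrict, hk', h])
    (by
      apply LinearMap.ext
      intro p
      simp [LinearMap.codRestrict, sub_add_cancel])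

/-- Schanuel's lemma. -/
theorem schanuel {P Q X : Type w} [AddCommGroup P] [Module R P] [AddCommGroup Q] [Module R Q]
    [AddCommGroup X] [Module R X] (f : P →ₗ[R] X) (g : Q →ₗ[R] X)
    (hf : Function.Surjective f) (hg : Function.Surjective g)
    (hP : Module.Projective R P) (hQ : Module.Projective R Q) :
    Nonempty ((↥(LinearMap.ker f) × Q) ≃ₗ[R] ↥(LinearMap.ker g) × P) := by
  haveI := hP; haveI := hQ
  set D : P × Q →ₗ[R] X := f ∘ₗ LinearMap.fst R P Q - g ∘ₗ LinearMap.snd R P Q with hD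
  have hmem : ∀ z : P × Q, z ∈ LinearMap.ker D ↔ f z.1 = g z.2 := by
    intro z
    simp [hD, LinearMap.mem_ker, sub_eq_zero]
  let π₁ : ↥(LinearMap.ker D) →ₗ[R] P := LinearMap.fst R P Q ∘ₗ (LinearMap.ker D).subtype
  let π₂ : ↥(LinearMap.ker D) →ₗ[R] Q := LinearMap.snd R P Q ∘ₗ (LinearMap.ker D).subtype
  have hπ₁ : Function.Surjective π₁ := fun p => by
    obtain ⟨q, hq⟩ := hg (f p)
    exact ⟨⟨(p, q), (hmem _).2 hq.symm⟩, rfl⟩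
  have hπ₂ : Function.Surjective π₂ := fun q => by
    obtain ⟨p, hp⟩ := hf (g q)
    exact ⟨⟨(p, q), (hmem _).2 hp⟩, rfl⟩
  obtain ⟨s₁, hs₁⟩ := π₁.exists_rightInverse_of_surjective (LinearMap.range_eq_top.2 hπ₁)
  obtain ⟨s₂, hs₂⟩ := π₂.exists_rightInverse_of_surjective (LinearMap.range_eq_top.2 hπ₂)
  let e₂ : ↥(LinearMap.ker π₂) ≃ₗ[R] ↥(LinearMap.ker f) := {
    toFun := fun t => ⟨(t.1.1 : P × Q).1, by
      have h1 : (t.1.1 : P × Q).2 = 0 := LinearMap.mem_ker.mp t.2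
      have h2 := (hmem t.1.1).1 t.1.2
      rw [LinearMap.mem_ker, h2, h1, map_zero]⟩
    invFun := fun p => ⟨⟨(p.1, 0), (hmem _).2 (by
        rw [LinearMap.mem_ker.mp p.2, map_zero])⟩, by
      simp [π₂, LinearMap.mem_ker]⟩
    map_add' := fun a b => rfl
    map_smul' := fun r a => rfl
    left_inv := fun t => by
      apply Subtype.ext; apply Subtype.ext
      have h1 : (t.1.1 : P × Q).2 = 0 := LinearMap.mem_ker.mp t.2
      exact Prod.ext rfl h1.symm
    right_inv := fun p => rfl }
  let e₁ : ↥(LinearMap.ker π₁) ≃ₗ[R] ↥(LinearMap.ker g) := {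
    toFun := fun t => ⟨(t.1.1 : P × Q).2, by
      have h1 : (t.1.1 : P × Q).1 = 0 := LinearMap.mem_ker.mp t.2
      have h2 := (hmem t.1.1).1 t.1.2
      rw [LinearMap.mem_ker, ← h2, h1, map_zero]⟩
    invFun := fun q => ⟨⟨(0, q.1), (hmem _).2 (by
        rw [LinearMap.mem_ker.mp q.2, map_zero])⟩, by
      simp [π₁, LinearMap.mem_ker]⟩
    map_add' := fun a b => rfl
    map_smul' := fun r a => rfl
    left_inv := fun t => by
      apply Subtype.ext; apply Subtype.ext
      have h1 : (t.1.1 : P × Q).1 = 0 := LinearMap.mem_ker.mp t.2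
      exact Prod.ext h1.symm rfl
    right_inv := fun q => rfl }
  exact ⟨((LinearEquiv.prodCongr e₂.symm (LinearEquiv.refl R Q)).trans
    (splitEquiv π₂ s₂ hs₂).symm).trans
    ((splitEquiv π₁ s₁ hs₁).trans (LinearEquiv.prodCongr e₁ (LinearEquiv.refl R P)))⟩

theorem hasPDLE_prod_fst : ∀ (n : ℕ) (X Y : Type w) [AddCommGroup X] [Module R X]
    [AddCommGroup Y] [Module R Y], HasPDLE R n (X × Y) → HasPDLE R n X
  | 0, X, Y, _, _, _, _, h => by
      haveI : Module.Projective R (X × Y) := h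
      exact Module.Projective.of_split (LinearMap.inl R X Y) (LinearMap.fst R X Y)
        (LinearMap.ext fun _ => rfl)
  | n+1, X, Y, _, _, _, _, h => by
      obtain ⟨P, iP1, iP2, g, hg, hgP, hker⟩ := h
      let p : (X →₀ R) →ₗ[R] X := Finsupp.linearCombination R _root_.id
      have hp : Function.Surjective p := fun x => ⟨Finsupp.single x 1, by simp [p]⟩
      let q : (Y →₀ R) →ₗ[R] Y := Finsupp.linearCombination R _root_.id
      have hq : Function.Surjective q := fun y => ⟨Finsupp.single y 1, by simp [q]⟩
      have hpq : Function.Surjective (p.prodMap q) := fun z => by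
        obtain ⟨x, hx⟩ := hp z.1
        obtain ⟨y, hy⟩ := hq z.2
        exact ⟨(x, y), by simp [LinearMap.prodMap_apply, hx, hy]⟩
      obtain ⟨e⟩ := schanuel (p.prodMap q) g hpq hg inferInstance hgP
      have h1 : HasPDLE R n (↥(LinearMap.ker g) × ((X →₀ R) × (Y →₀ R))) :=
        hasPDLE_prod_proj n hker inferInstance
      have h2 : HasPDLE R n (↥(LinearMap.ker (p.prodMap q)) × P) :=
        hasPDLE_congr n e.symm h1
      have hk : LinearMap.ker (p.prodMap q) = (LinearMap.ker p).prod (LinearMap.ker q) :=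
        LinearMap.ker_prodMap p q
      have h3a : HasPDLE R n ((↥(LinearMap.ker p) × ↥(LinearMap.ker q)) × P) :=
        hasPDLE_congr n
          (LinearEquiv.prodCongr ((LinearEquiv.ofEq _ _ hk).trans
            (prodSubEquiv (LinearMap.ker p) (LinearMap.ker q))) (LinearEquiv.refl R P)) h2
      have h3 : HasPDLE R n (↥(LinearMap.ker p) × (↥(LinearMap.ker q) × P)) :=
        hasPDLE_congr n
          (LinearEquiv.prodAssoc R ↥(LinearMap.ker p) ↥(LinearMap.ker q) P) h3a
      have h4 : HasPDLE R n ↥(LinearMap.ker p) := hasPDLE_prod_fst n _ _ h3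
      exact ⟨X →₀ R, _, _, p, hp, inferInstance, h4⟩

theorem hasPDLE_succ_iff {E X K : Type w} [AddCommGroup E] [Module R E] [AddCommGroup X]
    [Module R X] [AddCommGroup K] [Module R K] (hE : Module.Projective R E)
    (π : E →ₗ[R] X) (hπ : Function.Surjective π) (eK : K ≃ₗ[R] ↥(LinearMap.ker π)) (n : ℕ) :
    HasPDLE R (n + 1) X ↔ HasPDLE R n K := by
  constructor
  · rintro ⟨P, iP1, iP2, f, hf, hP, hker⟩
    obtain ⟨e⟩ := schanuel f π hf hπ hP hE
    have h1 := hasPDLE_prod_proj n hker hE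
    have h2 := hasPDLE_congr n e h1
    have h3 := hasPDLE_prod_fst n _ _ h2
    exact hasPDLE_congr n eK.symm h3
  · intro h
    exact ⟨E, inferInstance, inferInstance, π, hπ, hE, hasPDLE_congr n eK h⟩

theorem projDim_eq_one_add {X K : Type w} [AddCommGroup X] [Module R X] [AddCommGroup K]
    [Module R K] (hX : ¬ Module.Projective R X)
    (h : ∀ n : ℕ, HasPDLE R (n + 1) X ↔ HasPDLE R n K) :
    projDim R X = 1 + projDim R K := by
  classical
  unfold projDim
  by_cases hfin : ∃ n : ℕ, HasPDLE R n K
  · have h1 : sInf {d : ℕ∞ | ∃ n : ℕ, d = n ∧ HasPDLE R n K} = ((Nat.find hfin : ℕ) : ℕ∞) := by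
      apply le_antisymm
      · exact sInf_le ⟨Nat.find hfin, rfl, Nat.find_spec hfin⟩
      · apply le_sInf
        rintro d ⟨n, rfl, hn⟩
        exact_mod_cast Nat.find_min' hfin hn
    have h2 : sInf {d : ℕ∞ | ∃ n : ℕ, d = n ∧ HasPDLE R n X} =
        ((Nat.find hfin + 1 : ℕ) : ℕ∞) := by
      apply le_antisymm
      · exact sInf_le ⟨Nat.find hfin + 1, rfl, (h _).2 (Nat.find_spec hfin)⟩
      · apply le_sInf
        rintro d ⟨n, rfl, hn⟩
        cases n with
        | zero => exact absurd hn hX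
        | succ k =>
            have hk := Nat.find_min' hfin ((h k).1 hn)
            exact_mod_cast Nat.succ_le_succ hk
    rw [h1, h2]
    push_cast
    rw [add_comm]
  · have e1 : {d : ℕ∞ | ∃ n : ℕ, d = n ∧ HasPDLE R n K} = ∅ := by
      apply Set.eq_empty_iff_forall_notMem.2
      rintro d ⟨n, rfl, hn⟩
      exact hfin ⟨n, hn⟩
    have e2 : {d : ℕ∞ | ∃ n : ℕ, d = n ∧ HasPDLE R n X} = ∅ := by
      apply Set.eq_empty_iff_forall_notMem.2
      rintro d ⟨n, rfl, hn⟩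
      cases n with
      | zero => exact absurd hn hX
      | succ k => exact hfin ⟨k, (h k).1 hn⟩
    rw [e1, e2, sInf_empty]
    rfl

end AuxPD

end AuxPD

section Sequence

open Morita00

/-- The left ideal `Λe₁ = {(a,0,m,0)}` of `Λ_{(0,0)}`, as a left `Λ`-module. -/
def lamE₁ : Submodule (Morita00 A B M N) (Morita00 A B M N) where
  carrier := {x | x.n = 0 ∧ x.b = 0}
  add_mem' := by rintro x y ⟨hx1, hx2⟩ ⟨hy1, hy2⟩; constructor <;> simp_all
  zero_mem' := ⟨rfl, rfl⟩
  smul_mem' := by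
    rintro c x ⟨hx1, hx2⟩
    constructor <;> simp_all [smul_eq_mul]

/-- The left ideal `Λe₂ = {(0,n,0,b)}` of `Λ_{(0,0)}`, as a left `Λ`-module. -/
def lamE₂ : Submodule (Morita00 A B M N) (Morita00 A B M N) where
  carrier := {x | x.a = 0 ∧ x.m = 0}
  add_mem' := by rintro x y ⟨hx1, hx2⟩ ⟨hy1, hy2⟩; constructor <;> simp_all
  zero_mem' := ⟨rfl, rfl⟩
  smul_mem' := by
    rintro c x ⟨hx1, hx2⟩
    constructor <;> simp_all [smul_eq_mul]

/-- The `Λ_{(0,0)}`-linear map `M↓ → Λe₁`, `m ↦ (0,0,m,0)`. -/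
def iotaM : Res (θ₂ A B M N) M →ₗ[Morita00 A B M N] ↥(lamE₁ A B M N) where
  toFun m := ⟨⟨0, 0, m, 0⟩, rfl, rfl⟩
  map_add' m m' := by apply Subtype.ext; ext <;> simp <;> rfl
  map_smul' r m := by
    apply Subtype.ext
    ext <;> simp <;> rfl

/-- The `Λ_{(0,0)}`-linear map `Λe₁ → A↓`, `(a,0,m,0) ↦ a`. -/
def projA : ↥(lamE₁ A B M N) →ₗ[Morita00 A B M N] Res (θ₁ A B M N) A where
  toFun x := (x : Morita00 A B M N).a
  map_add' x y := rfl
  map_smul' r x := rfl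

/-- The `Λ_{(0,0)}`-linear map `N↓ → Λe₂`, `n ↦ (0,n,0,0)`. -/
def iotaN : Res (θ₁ A B M N) N →ₗ[Morita00 A B M N] ↥(lamE₂ A B M N) where
  toFun n := ⟨⟨0, n, 0, 0⟩, rfl, rfl⟩
  map_add' n n' := by apply Subtype.ext; ext <;> simp <;> rfl
  map_smul' r n := by
    apply Subtype.ext
    ext <;> simp <;> rfl

/-- The `Λ_{(0,0)}`-linear map `Λe₂ → B↓`, `(0,n,0,b) ↦ b`. -/
def projB : ↥(lamE₂ A B M N) →ₗ[Morita00 A B M N] Res (θ₂ A B M N) B where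
  toFun x := (x : Morita00 A B M N).b
  map_add' x y := rfl
  map_smul' r x := rfl

namespace MoritaAux

open Morita00 AuxPD

variable {A B M N}

/-- Right multiplication by `e₁`, as a `Λ`-linear map onto `Λe₁`. -/
def sE₁ : Morita00 A B M N →ₗ[Morita00 A B M N] ↥(lamE₁ A B M N) where
  toFun x := ⟨x * Morita00.e₁ A B M N, by constructor <;> simp [Morita00.e₁]⟩
  map_add' x y := Subtype.ext (add_mul x y _)
  map_smul' r x := Subtype.ext (mul_assoc r x _)

/-- Right multiplication by `e₂`, as a `Λ`-linear map onto `Λe₂`. -/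
def sE₂ : Morita00 A B M N →ₗ[Morita00 A B M N] ↥(lamE₂ A B M N) where
  toFun x := ⟨x * Morita00.e₂ A B M N, by constructor <;> simp [Morita00.e₂]⟩
  map_add' x y := Subtype.ext (add_mul x y _)
  map_smul' r x := Subtype.ext (mul_assoc r x _)

theorem projE₁ : Module.Projective (Morita00 A B M N) ↥(lamE₁ A B M N) := by
  apply Module.Projective.of_split (lamE₁ A B M N).subtype sE₁
  apply LinearMap.ext
  rintro ⟨x, hn, hb⟩
  apply Subtype.ext
  show x * Morita00.e₁ A B M N = x
  ext <;> simp [Morita00.e₁, hn, hb]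

theorem projE₂ : Module.Projective (Morita00 A B M N) ↥(lamE₂ A B M N) := by
  apply Module.Projective.of_split (lamE₂ A B M N).subtype sE₂
  apply LinearMap.ext
  rintro ⟨x, ha, hm⟩
  apply Subtype.ext
  show x * Morita00.e₂ A B M N = x
  ext <;> simp [Morita00.e₂, ha, hm]

theorem iotaM_inj : Function.Injective (iotaM A B M N) := fun a b hab =>
  congrArg (fun z : ↥(lamE₁ A B M N) => (z : Morita00 A B M N).m) hab

theorem iotaN_inj : Function.Injective (iotaN A B M N) := fun a b hab =>
  congrArg (fun z : ↥(lamE₂ A B M N) => (z : Morita00 A B M N).n) hab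

theorem projA_surj : Function.Surjective (projA A B M N) := fun a =>
  ⟨⟨⟨a, 0, 0, 0⟩, rfl, rfl⟩, rfl⟩

theorem projB_surj : Function.Surjective (projB A B M N) := fun b =>
  ⟨⟨⟨0, 0, 0, b⟩, rfl, rfl⟩, rfl⟩

theorem kerA_eq : LinearMap.ker (projA A B M N) = LinearMap.range (iotaM A B M N) := by
  ext z
  rw [LinearMap.mem_ker, LinearMap.mem_range]
  constructor
  · intro hz
    refine ⟨(z : Morita00 A B M N).m, ?_⟩
    apply Subtype.ext
    have hn := z.2.1
    have hb := z.2.2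
    have ha : (z : Morita00 A B M N).a = 0 := hz
    ext <;> simp [iotaM, ha, hn, hb]
  · rintro ⟨m, rfl⟩
    rfl

theorem kerB_eq : LinearMap.ker (projB A B M N) = LinearMap.range (iotaN A B M N) := by
  ext z
  rw [LinearMap.mem_ker, LinearMap.mem_range]
  constructor
  · intro hz
    refine ⟨(z : Morita00 A B M N).n, ?_⟩
    apply Subtype.ext
    have ha := z.2.1
    have hm := z.2.2
    have hb : (z : Morita00 A B M N).b = 0 := hz
    ext <;> simp [iotaN, ha, hm, hb]
  · rintro ⟨n, rfl⟩
    rfl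

theorem notProjA (hM : Nontrivial M) :
    ¬ Module.Projective (Morita00 A B M N) (Res (θ₁ A B M N) A) := by
  intro hproj
  haveI := hproj
  obtain ⟨s, hs⟩ := Module.projective_lifting_property (projA A B M N)
    (LinearMap.id (R := Morita00 A B M N) (M := Res (θ₁ A B M N) A)) projA_surj
  obtain ⟨m, hm⟩ := exists_ne (0 : M)
  set x := s (Res.mk (θ₁ A B M N) A 1) with hx
  have hxa : (x : Morita00 A B M N).a = 1 := LinearMap.congr_fun hs (Res.mk (θ₁ A B M N) A 1)
  set lam : Morita00 A B M N := ⟨0, 0, m, 0⟩ with hlam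
  have h0 : lam • (Res.mk (θ₁ A B M N) A 1) = 0 := by
    show Res.mk (θ₁ A B M N) A ((θ₁ A B M N) lam • (1 : A)) = 0
    show (θ₁ A B M N) lam • (1 : A) = 0
    simp [hlam]
  have h1 : lam • x = 0 := by rw [hx, ← map_smul, h0, map_zero]
  have h2 : ((lam • x : ↥(lamE₁ A B M N)) : Morita00 A B M N).m = m := by
    show (lam * (x : Morita00 A B M N)).m = m
    simp [hlam, hxa]
  rw [h1] at h2
  simp at h2
  exact hm h2.symm

theorem notProjB (hN : Nontrivial N) :
    ¬ Module.Projective (Morita00 A B M N) (Res (θ₂ A B M N) B) := by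
  intro hproj
  haveI := hproj
  obtain ⟨s, hs⟩ := Module.projective_lifting_property (projB A B M N)
    (LinearMap.id (R := Morita00 A B M N) (M := Res (θ₂ A B M N) B)) projB_surj
  obtain ⟨n, hn⟩ := exists_ne (0 : N)
  set x := s (Res.mk (θ₂ A B M N) B 1) with hx
  have hxb : (x : Morita00 A B M N).b = 1 := LinearMap.congr_fun hs (Res.mk (θ₂ A B M N) B 1)
  set lam : Morita00 A B M N := ⟨0, n, 0, 0⟩ with hlam
  have h0 : lam • (Res.mk (θ₂ A B M N) B 1) = 0 := by
    show Res.mk (θ₂ A B M N) B ((θ₂ A B M N) lam • (1 : B)) = 0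
    show (θ₂ A B M N) lam • (1 : B) = 0
    simp [hlam]
  have h1 : lam • x = 0 := by rw [hx, ← map_smul, h0, map_zero]
  have h2 : ((lam • x : ↥(lamE₂ A B M N)) : Morita00 A B M N).n = n := by
    show (lam * (x : Morita00 A B M N)).n = n
    simp [hlam, hxb]
  rw [h1] at h2
  simp at h2
  exact hn h2.symm

noncomputable def eqM : Res (θ₂ A B M N) M ≃ₗ[Morita00 A B M N]
    ↥(LinearMap.ker (projA A B M N)) :=
  (LinearEquiv.ofInjective (iotaM A B M N) iotaM_inj).trans
    (LinearEquiv.ofEq _ _ kerA_eq.symm)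

noncomputable def eqN : Res (θ₁ A B M N) N ≃ₗ[Morita00 A B M N]
    ↥(LinearMap.ker (projB A B M N)) :=
  (LinearEquiv.ofInjective (iotaN A B M N) iotaN_inj).trans
    (LinearEquiv.ofEq _ _ kerB_eq.symm)

end MoritaAux

/-- `Λe₁` is a projective left `Λ_{(0,0)}`-module and there is a short exact
sequence `0 → M↓ → Λe₁ → A↓ → 0`.  If `M ≠ 0` then `A↓` is not projective and
`pd_Λ(A↓) = 1 + pd_Λ(M↓)`.  Dually there is a short exact sequence
`0 → N↓ → Λe₂ → B↓ → 0`, and if `N ≠ 0` then `pd_Λ(B↓) = 1 + pd_Λ(N↓)`. -/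
theorem morita00_pd_sequence :
    Module.Projective (Morita00 A B M N) ↥(lamE₁ A B M N) ∧
    Function.Injective (iotaM A B M N) ∧
    Function.Surjective (projA A B M N) ∧
    LinearMap.ker (projA A B M N) = LinearMap.range (iotaM A B M N) ∧
    (Nontrivial M →
      ¬ Module.Projective (Morita00 A B M N) (Res (θ₁ A B M N) A) ∧
      projDim (Morita00 A B M N) (Res (θ₁ A B M N) A) =
        1 + projDim (Morita00 A B M N) (Res (θ₂ A B M N) M)) ∧
    Module.Projective (Morita00 A B M N) ↥(lamE₂ A B M N) ∧
    Function.Injective (iotaN A B M N) ∧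
    Function.Surjective (projB A B M N) ∧
    LinearMap.ker (projB A B M N) = LinearMap.range (iotaN A B M N) ∧
    (Nontrivial N →
      ¬ Module.Projective (Morita00 A B M N) (Res (θ₂ A B M N) B) ∧
      projDim (Morita00 A B M N) (Res (θ₂ A B M N) B) =
        1 + projDim (Morita00 A B M N) (Res (θ₁ A B M N) N)) := by
  refine ⟨MoritaAux.projE₁, MoritaAux.iotaM_inj, MoritaAux.projA_surj, MoritaAux.kerA_eq,
    fun hM => ⟨MoritaAux.notProjA hM, AuxPD.projDim_eq_one_add (MoritaAux.notProjA hM)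
      (fun n => AuxPD.hasPDLE_succ_iff MoritaAux.projE₁ (projA A B M N)
        MoritaAux.projA_surj MoritaAux.eqM n)⟩,
    MoritaAux.projE₂, MoritaAux.iotaN_inj, MoritaAux.projB_surj, MoritaAux.kerB_eq,
    fun hN => ⟨MoritaAux.notProjB hN, AuxPD.projDim_eq_one_add (MoritaAux.notProjB hN)
      (fun n => AuxPD.hasPDLE_succ_iff MoritaAux.projE₂ (projB A B M N)
        MoritaAux.projB_surj MoritaAux.eqN n)⟩⟩

end Sequence
end

section
/- Let Λ be a selfinjective Artin algebra over a commutative Artinian ring R, i.e. Λ is injective as a left Λ-module and as a right Λ-module. Let Δ_{(φ,φ)} be the Morita ring of the Morita context with A = B = M = N = Λ (all bimodule structures given by the multiplication of Λ) and structure maps φ = ψ. Then the Artin algebra Δ_{(φ,φ)} is selfinjective; in particular Δ_{(φ,φ)} is injective as a left module over itself. -/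
set_option linter.unusedVariables false
set_option linter.unusedSectionVars false

universe u v

variable (Λ : Type u) [Ring Λ]

/-- The data of a Morita context with `A = B = M = N = Λ` (all bimodule
structures given by the ring multiplication of `Λ`): a balanced biadditive map
`φ : Λ × Λ → Λ` satisfying the Morita-context conditions.  (By Corollary 2.13
the two structure maps of such a context necessarily coincide.) -/
structure MoritaMaps where
  φ : Λ → Λ → Λ
  φ_add_left : ∀ m m' n, φ (m + m') n = φ m n + φ m' n
  φ_add_right : ∀ m n n', φ m (n + n') = φ m n + φ m n'
  φ_mul_left : ∀ b m n, φ (b * m) n = b * φ m n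
  φ_mul_right : ∀ m n b, φ m (n * b) = φ m n * b
  φ_balanced : ∀ m a n, φ (m * a) n = φ m (a * n)
  φ_assoc₁ : ∀ m n m', φ m n * m' = m * φ n m'
  φ_assoc₂ : ∀ n m n', n * φ m n' = φ n m * n'

variable {Λ}

/-- The Morita ring `Δ_{(φ,φ)}` of the Morita context `(Λ, Λ, Λ, Λ, φ, φ)`: its
underlying additive group is `Λ × Λ × Λ × Λ`, with multiplication
`(a,n,m,b)·(a',n',m',b') = (aa' + φ(n,m'), an' + nb', ma' + bm', bb' + φ(m,n'))`. -/
@[ext] structure Delta (c : MoritaMaps Λ) where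
  a : Λ
  n : Λ
  m : Λ
  b : Λ

namespace Delta

variable {c : MoritaMaps Λ}

lemma φ_zero_left (n : Λ) : c.φ 0 n = 0 := by
  have h := c.φ_add_left 0 0 n
  rw [add_zero] at h
  have h2 : c.φ 0 n + 0 = c.φ 0 n + c.φ 0 n := by rw [add_zero]; exact h
  exact (add_left_cancel h2).symm

lemma φ_zero_right (m : Λ) : c.φ m 0 = 0 := by
  have h := c.φ_add_right m 0 0
  rw [add_zero] at h
  have h2 : c.φ m 0 + 0 = c.φ m 0 + c.φ m 0 := by rw [add_zero]; exact h
  exact (add_left_cancel h2).symm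

def equivProd : Delta c ≃ Λ × Λ × Λ × Λ where
  toFun x := (x.a, x.n, x.m, x.b)
  invFun p := ⟨p.1, p.2.1, p.2.2.1, p.2.2.2⟩
  left_inv x := rfl
  right_inv p := rfl

instance instAddCommGroup : AddCommGroup (Delta c) :=
  (equivProd (c := c)).addCommGroup

@[simp] lemma add_a (x y : Delta c) : (x + y).a = x.a + y.a := rfl
@[simp] lemma add_n (x y : Delta c) : (x + y).n = x.n + y.n := rfl
@[simp] lemma add_m (x y : Delta c) : (x + y).m = x.m + y.m := rfl
@[simp] lemma add_b (x y : Delta c) : (x + y).b = x.b + y.b := rfl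
@[simp] lemma zero_a : (0 : Delta c).a = 0 := rfl
@[simp] lemma zero_n : (0 : Delta c).n = 0 := rfl
@[simp] lemma zero_m : (0 : Delta c).m = 0 := rfl
@[simp] lemma zero_b : (0 : Delta c).b = 0 := rfl

instance instMul : Mul (Delta c) :=
  ⟨fun x y => ⟨x.a * y.a + c.φ x.n y.m, x.a * y.n + x.n * y.b,
    x.m * y.a + x.b * y.m, x.b * y.b + c.φ x.m y.n⟩⟩

instance instOne : One (Delta c) := ⟨⟨1, 0, 0, 1⟩⟩

@[simp] lemma mul_a (x y : Delta c) : (x * y).a = x.a * y.a + c.φ x.n y.m := rfl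
@[simp] lemma mul_n (x y : Delta c) : (x * y).n = x.a * y.n + x.n * y.b := rfl
@[simp] lemma mul_m (x y : Delta c) : (x * y).m = x.m * y.a + x.b * y.m := rfl
@[simp] lemma mul_b (x y : Delta c) : (x * y).b = x.b * y.b + c.φ x.m y.n := rfl
@[simp] lemma one_a : (1 : Delta c).a = 1 := rfl
@[simp] lemma one_n : (1 : Delta c).n = 0 := rfl
@[simp] lemma one_m : (1 : Delta c).m = 0 := rfl
@[simp] lemma one_b : (1 : Delta c).b = 1 := rfl

instance instRing : Ring (Delta c) where
  __ := instAddCommGroup (c := c)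
  __ := instMul
  __ := instOne
  mul_assoc x y z := by
    ext
    · simp only [mul_a, mul_n, mul_m, mul_b, c.φ_add_left, c.φ_add_right]
      rw [c.φ_balanced x.n y.b z.m]
      simp only [c.φ_mul_left, c.φ_mul_right, add_mul, mul_add, mul_assoc]
      abel
    · simp only [mul_n, mul_a, mul_b, add_mul, mul_add, mul_assoc, c.φ_assoc₂]
      abel
    · simp only [mul_m, mul_a, mul_b, add_mul, mul_add, mul_assoc, c.φ_assoc₁]
      abel
    · simp only [mul_a, mul_n, mul_m, mul_b, c.φ_add_left, c.φ_add_right]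
      rw [c.φ_balanced x.m y.a z.n]
      simp only [c.φ_mul_left, c.φ_mul_right, add_mul, mul_add, mul_assoc]
      abel
  one_mul x := by ext <;> simp [φ_zero_left]
  mul_one x := by ext <;> simp [φ_zero_right]
  left_distrib x y z := by
    ext <;> simp [mul_add, c.φ_add_right] <;> abel
  right_distrib x y z := by
    ext <;> simp [add_mul, c.φ_add_left] <;> abel
  zero_mul x := by ext <;> simp [φ_zero_left]
  mul_zero x := by ext <;> simp [φ_zero_right]

end Delta

/-! ### Auxiliary material: Frobenius-extension argument -/

section Aux

/-- Transfer of injectivity along a linear equivalence. -/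
theorem ModuleInjective.of_linearEquiv {R : Type u} [Ring R] {Q Q' : Type u}
    [AddCommGroup Q] [AddCommGroup Q'] [Module R Q] [Module R Q']
    (e : Q ≃ₗ[R] Q') (h : Module.Injective R Q) : Module.Injective R Q' := by
  constructor
  intro X Y _ _ _ _ f hf g
  obtain ⟨h', hh⟩ := h.out f hf (e.symm.toLinearMap.comp g)
  refine ⟨e.toLinearMap.comp h', fun x => ?_⟩
  simp [hh x]

/-- `op` as a linear equivalence from `T` (as a `Tᵐᵒᵖ`-module) to `Tᵐᵒᵖ` (as a
module over itself). -/
def opSelfEquiv (T : Type u) [Ring T] : T ≃ₗ[Tᵐᵒᵖ] Tᵐᵒᵖ where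
  toFun := MulOpposite.op
  invFun := MulOpposite.unop
  map_add' x y := rfl
  map_smul' s x := rfl
  left_inv x := rfl
  right_inv x := rfl

/-- If `S` is a "Frobenius extension" of `Λ` (via a ring map `ρ : Λ →+* S` and a
trace `tr : S →+ Λ` for which the pairing `(x, d) ↦ tr (x * d)` identifies `S`
with `Hom_Λ(S, Λ)`), then self-injectivity of `Λ` implies self-injectivity
of `S`. -/
theorem frob_inj {Λ S : Type u} [Ring Λ] [Ring S] (ρ : Λ →+* S)
    (tr : S →+ Λ)
    (htr : ∀ (l : Λ) (s : S), tr (ρ l * s) = l * tr s)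
    (θinj : ∀ d d' : S, (∀ x, tr (x * d) = tr (x * d')) → d = d')
    (θsurj : ∀ g : S → Λ, (∀ x y, g (x + y) = g x + g y) →
      (∀ (l : Λ) (x : S), g (ρ l * x) = l * g x) → ∃ d : S, ∀ x, tr (x * d) = g x)
    (hΛ : Module.Injective Λ Λ) : Module.Injective S S := by
  constructor
  intro X Y _ _ _ _ i hi f
  letI mX : Module Λ X := Module.compHom X ρ
  letI mY : Module Λ Y := Module.compHom Y ρ
  have smulX : ∀ (l : Λ) (x : X), l • x = ρ l • x := fun _ _ => rfl
  have smulY : ∀ (l : Λ) (y : Y), l • y = ρ l • y := fun _ _ => rfl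
  let iΛ : X →ₗ[Λ] Y :=
    { toFun := i, map_add' := i.map_add,
      map_smul' := fun l x => i.map_smul (ρ l) x }
  let g : X →ₗ[Λ] Λ :=
    { toFun := fun x => tr (f x)
      map_add' := fun x y => by
        show tr (f (x + y)) = tr (f x) + tr (f y)
        rw [f.map_add, tr.map_add]
      map_smul' := fun l x => by
        have h1 : f (l • x) = ρ l * f x := f.map_smul (ρ l) x
        show tr (f (l • x)) = l * tr (f x)
        rw [h1, htr] }
  obtain ⟨h, hh⟩ := hΛ.out iΛ (fun a b hab => hi hab) g
  have key : ∀ y : Y, ∃ d : S, ∀ δ : S, tr (δ * d) = h (δ • y) := by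
    intro y
    apply θsurj
    · intro x x'
      rw [add_smul, h.map_add]
    · intro l δ
      have h1 : (ρ l * δ) • y = ρ l • (δ • y) := mul_smul _ _ _
      rw [h1]
      exact h.map_smul l (δ • y)
  choose F hF using key
  have Fadd : ∀ y y' : Y, F (y + y') = F y + F y' := by
    intro y y'
    refine θinj _ _ fun δ => ?_
    rw [hF, mul_add, tr.map_add, hF, hF, smul_add, h.map_add]
  have Fsmul : ∀ (s : S) (y : Y), F (s • y) = s * F y := by
    intro s y
    refine θinj _ _ fun δ => ?_
    rw [hF, ← mul_assoc, hF, ← mul_smul]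
  refine ⟨{ toFun := F, map_add' := Fadd, map_smul' := Fsmul }, fun x => ?_⟩
  show F (i x) = f x
  refine θinj _ _ fun δ => ?_
  have h1 : δ • i x = i (δ • x) := (i.map_smul δ x).symm
  rw [hF, h1]
  have h2 : h (i (δ • x)) = tr (f (δ • x)) := hh (δ • x)
  rw [h2, f.map_smul]
  rfl

end Aux

/-- Let `Λ` be a selfinjective Artin algebra over a commutative Artinian ring `R`
(injective as a left and as a right module over itself), and let `Δ_{(φ,φ)}` be
the Morita ring of the Morita context with `A = B = M = N = Λ` and `R`-bilinear
structure map `φ = ψ`.  Then the Artin algebra `Δ_{(φ,φ)}` is selfinjective; in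
particular it is injective as a left module over itself. -/
theorem delta_selfinjective {Λ : Type u} [Ring Λ]
    (R : Type u) [CommRing R] [IsArtinianRing R] [Algebra R Λ] [Module.Finite R Λ]
    (c : MoritaMaps Λ)
    (hl : ∀ (r : R) (m n : Λ), c.φ (r • m) n = r • c.φ m n)
    (hr : ∀ (r : R) (m n : Λ), c.φ m (r • n) = r • c.φ m n)
    (hleft : Module.Injective Λ Λ) (hright : Module.Injective Λᵐᵒᵖ Λ) :
    Module.Injective (Delta c) (Delta c) ∧
      Module.Injective (Delta c)ᵐᵒᵖ (Delta c) := by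
  classical
  -- the diagonal ring homomorphism `Λ →+* Δ`
  let ρ : Λ →+* Delta c :=
    { toFun := fun a => ⟨a, 0, 0, a⟩
      map_one' := rfl
      map_mul' := fun a b => by
        ext <;> simp [Delta.φ_zero_left, Delta.φ_zero_right]
      map_zero' := rfl
      map_add' := fun a b => by ext <;> simp }
  -- the trace map `Δ →+ Λ`, `(a,n,m,b) ↦ n + m`
  let tr : Delta c →+ Λ :=
    { toFun := fun x => x.n + x.m
      map_zero' := by simp
      map_add' := fun x y => by simp; abel }
  have hρ : ∀ (l : Λ) (x : Delta c), ρ l * x = ⟨l * x.a, l * x.n, l * x.m, l * x.b⟩ := by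
    intro l x
    change (⟨l, 0, 0, l⟩ : Delta c) * x = _
    ext <;> simp [ρ, Delta.φ_zero_left, Delta.φ_zero_right]
  have hρ' : ∀ (x : Delta c) (l : Λ), x * ρ l = ⟨x.a * l, x.n * l, x.m * l, x.b * l⟩ := by
    intro x l
    change x * (⟨l, 0, 0, l⟩ : Delta c) = _
    ext <;> simp [ρ, Delta.φ_zero_left, Delta.φ_zero_right]
  -- basis elements
  let E₁ : Delta c := ⟨1, 0, 0, 0⟩
  let E₂ : Delta c := ⟨0, 1, 0, 0⟩
  let E₃ : Delta c := ⟨0, 0, 1, 0⟩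
  let E₄ : Delta c := ⟨0, 0, 0, 1⟩
  have trE : ∀ x : Delta c, tr x = x.n + x.m := fun _ => rfl
  have pair : ∀ x d : Delta c,
      tr (x * d) = x.a * d.n + x.n * d.b + (x.m * d.a + x.b * d.m) := by
    intro x d; rfl
  have θinj : ∀ d d' : Delta c, (∀ x, tr (x * d) = tr (x * d')) → d = d' := by
    intro d d' hdd
    have h1 := hdd E₁
    have h2 := hdd E₂
    have h3 := hdd E₃
    have h4 := hdd E₄
    simp only [pair, E₁, E₂, E₃, E₄, one_mul, zero_mul, add_zero, zero_add] at h1 h2 h3 h4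
    ext
    · exact h3
    · exact h1
    · exact h4
    · exact h2
  have θsurj : ∀ g : Delta c → Λ, (∀ x y, g (x + y) = g x + g y) →
      (∀ (l : Λ) (x : Delta c), g (ρ l * x) = l * g x) →
      ∃ d : Delta c, ∀ x, tr (x * d) = g x := by
    intro g gadd gsmul
    refine ⟨⟨g E₃, g E₁, g E₄, g E₂⟩, fun x => ?_⟩
    have hx : x = ρ x.a * E₁ + (ρ x.n * E₂ + (ρ x.m * E₃ + ρ x.b * E₄)) := by
      simp only [hρ, E₁, E₂, E₃, E₄]
      ext <;> simp
    rw [pair]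
    conv_rhs => rw [hx]
    rw [gadd, gadd, gadd, gsmul, gsmul, gsmul, gsmul]
    ring_nf
    abel
  have left : Module.Injective (Delta c) (Delta c) := frob_inj ρ tr
    (fun l s => by rw [hρ]; simp [trE, mul_add]) θinj θsurj hleft
  -- the opposite side
  let ρ' : Λᵐᵒᵖ →+* (Delta c)ᵐᵒᵖ :=
    { toFun := fun l => MulOpposite.op (ρ l.unop)
      map_one' := rfl
      map_mul' := fun a b => by
        simp [← MulOpposite.op_mul, ← map_mul]
      map_zero' := by simp
      map_add' := fun a b => by simp [← MulOpposite.op_add, ← map_add] }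
  let tr' : (Delta c)ᵐᵒᵖ →+ Λᵐᵒᵖ :=
    { toFun := fun x => MulOpposite.op (tr x.unop)
      map_zero' := by simp
      map_add' := fun x y => by simp }
  have pair' : ∀ x d : (Delta c)ᵐᵒᵖ,
      tr' (x * d) = MulOpposite.op (d.unop.a * x.unop.n + d.unop.n * x.unop.b +
        (d.unop.m * x.unop.a + d.unop.b * x.unop.m)) := by
    intro x d; rfl
  have θinj' : ∀ d d' : (Delta c)ᵐᵒᵖ, (∀ x, tr' (x * d) = tr' (x * d')) → d = d' := by
    intro d d' hdd
    have h1 := hdd (MulOpposite.op E₁)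
    have h2 := hdd (MulOpposite.op E₂)
    have h3 := hdd (MulOpposite.op E₃)
    have h4 := hdd (MulOpposite.op E₄)
    simp only [pair', E₁, E₂, E₃, E₄, MulOpposite.unop_op, MulOpposite.op_inj,
      mul_one, mul_zero, add_zero, zero_add] at h1 h2 h3 h4
    have : d.unop = d'.unop := by
      ext
      · exact h2
      · exact h4
      · exact h1
      · exact h3
    exact MulOpposite.unop_injective this
  have θsurj' : ∀ g : (Delta c)ᵐᵒᵖ → Λᵐᵒᵖ, (∀ x y, g (x + y) = g x + g y) →
      (∀ (l : Λᵐᵒᵖ) (x : (Delta c)ᵐᵒᵖ), g (ρ' l * x) = l * g x) →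
      ∃ d : (Delta c)ᵐᵒᵖ, ∀ x, tr' (x * d) = g x := by
    intro g gadd gsmul
    refine ⟨MulOpposite.op ⟨(g (MulOpposite.op E₂)).unop, (g (MulOpposite.op E₄)).unop,
      (g (MulOpposite.op E₁)).unop, (g (MulOpposite.op E₃)).unop⟩, fun x => ?_⟩
    have hx : x = ρ' (MulOpposite.op x.unop.a) * MulOpposite.op E₁ +
        (ρ' (MulOpposite.op x.unop.n) * MulOpposite.op E₂ +
        (ρ' (MulOpposite.op x.unop.m) * MulOpposite.op E₃ +
        ρ' (MulOpposite.op x.unop.b) * MulOpposite.op E₄)) := by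
      show x = MulOpposite.op (E₁ * ρ x.unop.a) + (MulOpposite.op (E₂ * ρ x.unop.n) +
        (MulOpposite.op (E₃ * ρ x.unop.m) + MulOpposite.op (E₄ * ρ x.unop.b)))
      simp only [hρ', E₁, E₂, E₃, E₄, ← MulOpposite.op_add]
      refine MulOpposite.unop_injective ?_
      ext <;> simp
    rw [pair']
    conv_rhs => rw [hx]
    rw [gadd, gadd, gadd, gsmul, gsmul, gsmul, gsmul]
    simp only [MulOpposite.unop_op]
    rw [← MulOpposite.op_unop (g (MulOpposite.op E₁)), ← MulOpposite.op_unop (g (MulOpposite.op E₂)),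
      ← MulOpposite.op_unop (g (MulOpposite.op E₃)), ← MulOpposite.op_unop (g (MulOpposite.op E₄))]
    simp only [← MulOpposite.op_mul, ← MulOpposite.op_add, MulOpposite.op_inj,
      MulOpposite.unop_op]
    abel
  have hΛop : Module.Injective Λᵐᵒᵖ Λᵐᵒᵖ :=
    ModuleInjective.of_linearEquiv (opSelfEquiv Λ) hright
  have htr' : ∀ (l : Λᵐᵒᵖ) (s : (Delta c)ᵐᵒᵖ), tr' (ρ' l * s) = l * tr' s := by
    intro l s
    show MulOpposite.op (tr (s.unop * ρ l.unop)) = MulOpposite.op (tr s.unop * l.unop)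
    rw [hρ']
    simp [trE, add_mul]
  have rightOp : Module.Injective (Delta c)ᵐᵒᵖ (Delta c)ᵐᵒᵖ :=
    frob_inj ρ' tr' htr' θinj' θsurj' hΛop
  exact ⟨left, ModuleInjective.of_linearEquiv (opSelfEquiv (Delta c)).symm rightOp⟩
end
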